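/- arXiv:1106.2407 — 3 statements merged into one kernel-verified Lean document; each statement's English description precedes it below -/
import Mathlib

section
/- Let f_1, ..., f_m be real numbers, sorted so that f_σ(1) ≥ ... ≥ f_σ(m) for some permutation σ, and let 1 ≤ k ≤ m-1. Define g(t) := min { k·t + Σ_{j=1}^m r_j : r_j ≥ max(f_j − t, 0) for all j } = k·t + Σ_{j=1}^m max(f_j − t, 0). Then g is convex, and g attains its minimum value S_k = Σ_{j=1}^k f_σ(j) at every point t in the interval (f_σ(k+1), f_σ(k)]. -/
/-!
For any set `s` of `k` indices, `∑ i ∈ s, f i = k t + ∑ i ∈ s, (f i - t) ≤ g t`, so the sum of the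
`k` largest values bounds `g` from below. When `t` separates the `k` largest values from the
others, `max (f i - t) 0` is `f i - t` on those indices and `0` elsewhere, so the bound is attained.
-/
open Finset

theorem convexOn_mul_add_sum_max_sub {ι : Type*} [Fintype ι] (c : ℝ) (f : ι → ℝ) :
    ConvexOn ℝ Set.univ (fun t : ℝ => c * t + ∑ i, max (f i - t) 0) := by
  have hpos : ∀ i, ConvexOn ℝ Set.univ (fun t : ℝ => max (f i - t) 0) := fun i =>
    ((convexOn_const (f i) convex_univ).sub (concaveOn_id convex_univ)).sup
      (convexOn_const 0 convex_univ)
  have hsum : ConvexOn ℝ Set.univ (fun t : ℝ => ∑ i, max (f i - t) 0) := by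
    simpa only [sum_fn] using sum_induction _ (ConvexOn ℝ Set.univ)
      (fun _ _ => ConvexOn.add) (convexOn_const 0 convex_univ) fun i _ => hpos i
  have hlin : ConvexOn ℝ Set.univ (fun t : ℝ => c * t) :=
    (LinearMap.mul ℝ ℝ c).convexOn convex_univ
  exact hlin.add hsum

theorem sum_le_card_mul_add_sum_max_sub {ι : Type*} [Fintype ι] (f : ι → ℝ) (s : Finset ι)
    (t : ℝ) : ∑ i ∈ s, f i ≤ #s * t + ∑ i, max (f i - t) 0 :=
  calc ∑ i ∈ s, f i = #s * t + ∑ i ∈ s, (f i - t) := by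
        rw [sum_sub_distrib, sum_const, nsmul_eq_mul]; ring
    _ ≤ #s * t + ∑ i ∈ s, max (f i - t) 0 := by gcongr; exact le_max_left _ _
    _ ≤ #s * t + ∑ i, max (f i - t) 0 := by
        grw [sum_le_univ_sum_of_nonneg fun i => le_max_right (f i - t) 0]

theorem card_mul_add_sum_max_sub_eq_sum {ι : Type*} [Fintype ι] (f : ι → ℝ) (s : Finset ι)
    (t : ℝ) (hs : ∀ i ∈ s, t ≤ f i) (hsc : ∀ i ∉ s, f i ≤ t) :
    #s * t + ∑ i, max (f i - t) 0 = ∑ i ∈ s, f i := by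
  classical
  have hmax : ∀ i, max (f i - t) 0 = if i ∈ s then f i - t else 0 := fun i => by
    split_ifs with hi
    · exact max_eq_left (sub_nonneg.2 (hs i hi))
    · exact max_eq_right (sub_nonpos.2 (hsc i hi))
  simp only [hmax, sum_ite_mem, univ_inter, sum_sub_distrib, sum_const, nsmul_eq_mul]
  ring

/-- For sorted f_σ(1) ≥ ... ≥ f_σ(m) and 1 ≤ k ≤ m-1, the function
g(t) = k·t + ∑_j max(f_j − t, 0) is convex and attains its minimum value
S_k = ∑_{j=1}^k f_σ(j) at every t in the interval (f_σ(k+1), f_σ(k)]. -/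
theorem stmt_3 (m k : ℕ) (hkm : k < m) (f : Fin m → ℝ)
    (σ : Equiv.Perm (Fin m)) (hσ : ∀ i j : Fin m, i ≤ j → f (σ j) ≤ f (σ i)) :
    ConvexOn ℝ Set.univ (fun t : ℝ => k * t + ∑ j : Fin m, max (f j - t) 0) ∧
    ∀ t : ℝ, f (σ ⟨k, hkm⟩) < t → t ≤ f (σ ⟨k - 1, by omega⟩) →
      ((k * t + ∑ j : Fin m, max (f j - t) 0)
          = ∑ j : Fin m, if (j : ℕ) < k then f (σ j) else 0) ∧
      (∀ t' : ℝ, (k * t + ∑ j : Fin m, max (f j - t) 0)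
          ≤ k * t' + ∑ j : Fin m, max (f j - t') 0) := by
  set s : Finset (Fin m) := {j | (j : ℕ) < k}
  have hg : ∀ t : ℝ, k * t + ∑ j, max (f j - t) 0 = #s * t + ∑ j, max (f (σ j) - t) 0 := by
    intro t
    rw [Equiv.sum_comp σ fun j => max (f j - t) 0, Fin.card_filter_val_lt, min_eq_right hkm.le]
  have hS : (∑ j : Fin m, if (j : ℕ) < k then f (σ j) else 0) = ∑ j ∈ s, f (σ j) :=
    (sum_filter _ _).symm
  refine ⟨convexOn_mul_add_sum_max_sub _ f, fun t ht₁ ht₂ => ?_⟩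
  have heq : k * t + ∑ j, max (f j - t) 0 = ∑ j : Fin m, if (j : ℕ) < k then f (σ j) else 0 := by
    rw [hg, hS]
    refine card_mul_add_sum_max_sub_eq_sum _ s t (fun j hj => ht₂.trans (hσ _ _ ?_))
      (fun j hj => (hσ _ _ ?_).trans ht₁.le)
    all_goals simp [s, Fin.le_def] at hj ⊢; omega
  refine ⟨heq, fun t' => ?_⟩
  rw [heq, hS, hg]
  exact sum_le_card_mul_add_sum_max_sub _ s t'
end

section
/- Let f_1, ..., f_m be real numbers and λ_1 ≥ ... ≥ λ_m ≥ 0 nonincreasing nonnegative weights (λ_{m+1} := 0). Then Σ_{j=1}^m λ_j f_{(j)} equals the minimum over (t_1, ..., t_m) ∈ ℝ^m and (r_{kj}) ∈ ℝ^{m×m} with r_{kj} ≥ 0 and t_k + r_{kj} ≥ f_j for all j, k, of Σ_{k=1}^m (λ_k − λ_{k+1}) ( k·t_k + Σ_{j=1}^m r_{kj} ). -/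
open Finset

lemma tele (m : ℕ) (lam : ℕ → ℝ) (hlast : lam m = 0) (j : ℕ) (hj : j ≤ m) :
    ∑ k ∈ Finset.Ico j m, (lam k - lam (k + 1)) = lam j := by
  rw [Finset.sum_Ico_eq_sum_range]
  have := Finset.sum_range_sub' (fun i => lam (j + i)) (m - j)
  simp only [add_zero] at this
  rw [Nat.add_sub_cancel' hj] at this
  simpa [hlast, Nat.add_assoc] using this

lemma abel (m : ℕ) (lam : ℕ → ℝ) (hlast : lam m = 0) (g : Fin m → ℝ) :
    ∑ k : Fin m, (lam k - lam ((k : ℕ) + 1)) * ∑ j ∈ Finset.Iic k, g j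
      = ∑ j : Fin m, lam j * g j := by
  have h1 : ∀ k : Fin m, (lam k - lam ((k : ℕ) + 1)) * ∑ j ∈ Finset.Iic k, g j
      = ∑ j : Fin m, (if j ≤ k then (lam k - lam ((k : ℕ) + 1)) * g j else 0) := by
    intro k
    rw [Finset.mul_sum, ← Finset.sum_filter]
    congr 1
    ext x
    simp
  simp_rw [h1]
  rw [Finset.sum_comm]
  congr 1
  ext j
  rw [← Finset.sum_filter]
  have himg : (Finset.filter (fun k : Fin m => j ≤ k) Finset.univ).image Fin.val
      = Finset.Ico (j : ℕ) m := by
    ext x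
    simp only [Finset.mem_image, Finset.mem_filter, Finset.mem_univ, true_and,
      Finset.mem_Ico, Fin.le_def]
    constructor
    · rintro ⟨a, ha, rfl⟩; exact ⟨ha, a.isLt⟩
    · rintro ⟨h1, h2⟩; exact ⟨⟨x, h2⟩, h1, rfl⟩
  have hval : (lam (j : ℕ) : ℝ) * g j
      = (∑ x ∈ Finset.Ico (j : ℕ) m, (lam x - lam (x + 1))) * g j := by
    rw [tele m lam hlast j (le_of_lt j.isLt)]
  rw [hval, Finset.sum_mul, ← himg,
    Finset.sum_image (fun a _ b _ h => Fin.val_injective h)]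

/-- For nonincreasing nonnegative weights λ_1 ≥ ... ≥ λ_m ≥ 0 (λ_{m+1} := 0),
∑_j λ_j f_{(j)} equals the minimum over t ∈ ℝ^m and r ∈ ℝ^{m×m} with r_{kj} ≥ 0 and
t_k + r_{kj} ≥ f_j, of ∑_k (λ_k − λ_{k+1})(k·t_k + ∑_j r_{kj}).
Indices are 0-based: `lam i` is λ_{i+1} and `t k` is t_{k+1}, so the factor k is (k:ℕ)+1. -/
theorem stmt_6 (m : ℕ) (f : Fin m → ℝ) (lam : ℕ → ℝ)
    (hmono : ∀ i j : ℕ, i ≤ j → j ≤ m → lam j ≤ lam i) (hlast : lam m = 0)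
    (σ : Equiv.Perm (Fin m)) (hσ : ∀ i j : Fin m, i ≤ j → f (σ j) ≤ f (σ i)) :
    IsLeast
      {y : ℝ | ∃ (t : Fin m → ℝ) (r : Fin m → Fin m → ℝ),
        (∀ k j, 0 ≤ r k j) ∧ (∀ k j, f j ≤ t k + r k j) ∧
        y = ∑ k : Fin m, (lam k - lam ((k : ℕ) + 1)) *
              (((k : ℕ) + 1) * t k + ∑ j : Fin m, r k j)}
      (∑ j : Fin m, lam j * f (σ j)) := by
  set g : Fin m → ℝ := fun j => f (σ j) with hg
  have habel := abel m lam hlast g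
  constructor
  · -- membership: t k = g k, r k j = max (f j - g k) 0
    refine ⟨fun k => g k, fun k j => max (f j - g k) 0, fun k j => le_max_right _ _,
      fun k j => ?_, ?_⟩
    · have := le_max_left (f j - g k) 0
      linarith
    · rw [← habel]
      apply Finset.sum_congr rfl
      intro k _
      congr 1
      -- (k+1) * g k + ∑ j, max (f j - g k) 0 = ∑ j ∈ Iic k, g j
      have hperm : ∑ j : Fin m, max (f j - g k) 0 = ∑ j : Fin m, max (g j - g k) 0 :=
        (Equiv.sum_comp σ (fun j => max (f j - g k) 0)).symm
      rw [hperm, ← Finset.sum_add_sum_compl (Finset.Iic k) (fun j => max (g j - g k) 0)]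
      have hA : ∑ j ∈ Finset.Iic k, max (g j - g k) 0
          = ∑ j ∈ Finset.Iic k, (g j - g k) := by
        apply Finset.sum_congr rfl
        intro j hj
        have : g k ≤ g j := hσ j k (Finset.mem_Iic.1 hj)
        exact max_eq_left (by linarith)
      have hB : ∑ j ∈ (Finset.Iic k)ᶜ, max (g j - g k) 0 = 0 := by
        apply Finset.sum_eq_zero
        intro j hj
        have : k ≤ j := le_of_lt (by simpa using hj)
        have : g j ≤ g k := hσ k j this
        exact max_eq_right (by linarith)
      rw [hA, hB, Finset.sum_sub_distrib, Finset.sum_const, Fin.card_Iic]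
      push_cast
      ring
  · -- lower bound
    rintro y ⟨t, r, hr, hfeas, rfl⟩
    rw [show (∑ j : Fin m, lam (j : ℕ) * f (σ j)) = ∑ j : Fin m, lam (j : ℕ) * g j from rfl,
      ← habel]
    apply Finset.sum_le_sum
    intro k _
    have hc : 0 ≤ lam (k : ℕ) - lam ((k : ℕ) + 1) :=
      sub_nonneg.2 (hmono k ((k : ℕ) + 1) (Nat.le_succ _) k.isLt)
    apply mul_le_mul_of_nonneg_left _ hc
    -- ∑ j ∈ Iic k, g j ≤ (k+1) * t k + ∑ j, r k j
    have h1 : ∑ j ∈ Finset.Iic k, g j ≤ ∑ j ∈ Finset.Iic k, (t k + r k (σ j)) :=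
      Finset.sum_le_sum (fun j _ => hfeas k (σ j))
    have h2 : ∑ j ∈ Finset.Iic k, (t k + r k (σ j))
        = ((k : ℕ) + 1) * t k + ∑ j ∈ Finset.Iic k, r k (σ j) := by
      rw [Finset.sum_add_distrib, Finset.sum_const, Fin.card_Iic]
      ring
    have h3 : ∑ j ∈ Finset.Iic k, r k (σ j) ≤ ∑ j : Fin m, r k j := by
      rw [← Finset.sum_image (s := Finset.Iic k) (g := fun j => σ j)
        (f := fun j => r k j) (fun a _ b _ h => σ.injective h)]
      exact Finset.sum_le_sum_of_subset_of_nonneg (Finset.subset_univ _)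
        (fun j _ _ => hr k j)
    linarith
end

section
/- Let K ⊆ ℝ^n be a nonempty compact set, f_1, ..., f_m : K → ℝ continuous, and 0 ≤ k_1, with k_1 + k_2 ≤ m. Then min_{x ∈ K} Σ_{i=k_1+1}^{m−k_2} f_{(i)}(x) equals the minimum of (m−k_2)·t + Σ_{j=1}^m r_j − Σ_{j=1}^m v_j f_j(x) over all (x, t, r, v) with x ∈ K, t + r_j ≥ f_j(x), r_j ≥ 0, v_j ∈ {0,1}, and Σ_{j=1}^m v_j = k_1. -/
/-!
Write `s = a ∘ Tuple.sort a` for the increasing rearrangement of `a : Fin m → ℝ`. The trimmed sum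
is a difference of two sums of smallest entries, and the sum of the `p` smallest entries is the
minimum of `∑ j ∈ S, a j` over `p`-subsets `S` (exchange argument around a threshold separating
`s` below and above index `p`). Hence it is continuous in `x`, and its minimum over `K` exists.

For fixed `x` the inner problem splits: `(m - k₂) t + ∑ r` is the LP dual of the sum of the
`m - k₂` largest entries (tight at `t = s k₂`, `r = (a - t)⁺`), and `∑ v j a j` with `v` a
`0-1` vector of weight `k₁` is maximised by the indicator of the `k₁` largest entries.
-/

open Finset

variable {m : ℕ}

lemma Monotone.exists_separating {α : Type*} [LinearOrder α] [Nonempty α] {s : Fin m → α}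
    (hs : Monotone s) (p : ℕ) :
    ∃ t, ∀ j : Fin m, ((j : ℕ) < p → s j ≤ t) ∧ (p ≤ (j : ℕ) → t ≤ s j) := by
  by_cases hp : p < m
  · exact ⟨s ⟨p, hp⟩, fun j => ⟨fun hj => hs (Fin.le_def.2 hj.le), fun hj => hs hj⟩⟩
  · obtain ⟨t, ht⟩ := (Set.finite_range s).bddAbove
    exact ⟨t, fun j => ⟨fun _ => ht ⟨j, rfl⟩, fun hj => absurd j.2 (by omega)⟩⟩

lemma Monotone.sum_filter_lt_card_le_sum {M : Type*} [AddCommGroup M] [LinearOrder M]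
    [IsOrderedAddMonoid M] {s : Fin m → M} (hs : Monotone s) (T : Finset (Fin m)) :
    (∑ j : Fin m, if (j : ℕ) < #T then s j else 0) ≤ ∑ j ∈ T, s j := by
  rw [← sum_filter]
  set I : Finset (Fin m) := {j | (j : ℕ) < #T}
  have hI : #I = #T := by
    rw [Fin.card_filter_val_lt, min_eq_right (by simpa using card_le_univ T)]
  obtain ⟨t, ht⟩ := hs.exists_separating #T
  have hlow : ∑ j ∈ I \ T, s j ≤ #(I \ T) • t :=
    sum_le_card_nsmul _ _ _ fun j hj => (ht j).1 (by simpa [I] using (mem_sdiff.1 hj).1)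
  have hhigh : #(T \ I) • t ≤ ∑ j ∈ T \ I, s j :=
    card_nsmul_le_sum _ _ _ fun j hj => (ht j).2 (by simpa [I] using (mem_sdiff.1 hj).2)
  rw [card_sdiff_comm hI] at hlow
  rw [← sub_nonpos, ← sum_sdiff_sub_sum_sdiff, sub_nonpos]
  exact hlow.trans hhigh

noncomputable def sumSmallest (a : Fin m → ℝ) (p : ℕ) : ℝ :=
  ∑ j : Fin m, if (j : ℕ) < p then a (Tuple.sort a j) else 0

lemma sumSmallest_le_sum (a : Fin m → ℝ) (S : Finset (Fin m)) :
    sumSmallest a #S ≤ ∑ j ∈ S, a j := by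
  have h := (Tuple.monotone_sort a).sum_filter_lt_card_le_sum
    (S.map (Tuple.sort a).symm.toEmbedding)
  simpa [sumSmallest] using h

lemma exists_card_eq_sum_eq_sumSmallest (a : Fin m → ℝ) {p : ℕ} (hp : p ≤ m) :
    ∃ S : Finset (Fin m), #S = p ∧ ∑ j ∈ S, a j = sumSmallest a p :=
  ⟨({j | (j : ℕ) < p} : Finset (Fin m)).map (Tuple.sort a).toEmbedding,
    by simp [Fin.card_filter_val_lt, hp], by rw [sum_map, sumSmallest, sum_filter]; rfl⟩

lemma sumSmallest_eq_inf' (a : Fin m → ℝ) {p : ℕ} (hp : p ≤ m) :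
    sumSmallest a p = (powersetCard p univ).inf' (powersetCard_nonempty.2 (by simpa using hp))
      (fun S => ∑ j ∈ S, a j) := by
  obtain ⟨S, hS, hsum⟩ := exists_card_eq_sum_eq_sumSmallest a hp
  refine le_antisymm (le_inf' _ _ fun T hT => ?_) (hsum ▸ inf'_le _ (mem_powersetCard_univ.2 hS))
  rw [← mem_powersetCard_univ.1 hT]
  exact sumSmallest_le_sum a T

lemma ContinuousOn.sumSmallest {X : Type*} [TopologicalSpace X] {f : Fin m → X → ℝ}
    {K : Set X} (hf : ∀ i, ContinuousOn (f i) K) {p : ℕ} (hp : p ≤ m) :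
    ContinuousOn (fun x => sumSmallest (fun j => f j x) p) K := by
  simp only [sumSmallest_eq_inf' _ hp]
  exact ContinuousOn.finset_inf'_apply _ fun S _ => continuousOn_finsetSum S fun j _ => hf j

lemma sumSmallest_sub_sumSmallest (a : Fin m → ℝ) {p q : ℕ} (hpq : p ≤ q) :
    sumSmallest a q - sumSmallest a p =
      ∑ j : Fin m, if p ≤ (j : ℕ) ∧ (j : ℕ) < q then a (Tuple.sort a j) else 0 := by
  rw [sumSmallest, sumSmallest, ← sum_sub_distrib]
  refine sum_congr rfl fun j _ => ?_
  split_ifs <;> first | (exfalso; omega) | simp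

lemma sum_le_card_mul_add_sum {a r : Fin m → ℝ} {t : ℝ} (hr : ∀ j, 0 ≤ r j)
    (htr : ∀ j, a j ≤ t + r j) (S : Finset (Fin m)) :
    ∑ j ∈ S, a j ≤ #S * t + ∑ j, r j :=
  calc ∑ j ∈ S, a j ≤ ∑ j ∈ S, (t + r j) := sum_le_sum fun j _ => htr j
    _ = #S * t + ∑ j ∈ S, r j := by rw [sum_add_distrib, sum_const, nsmul_eq_mul]
    _ ≤ #S * t + ∑ j, r j := by
      gcongr
      · exact fun j _ _ => hr j
      · exact subset_univ S

lemma exists_card_eq_sum_eq_sum_sub_sumSmallest (a : Fin m → ℝ) {p : ℕ} (hp : p ≤ m) :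
    ∃ S : Finset (Fin m), #S = m - p ∧ ∑ j ∈ S, a j = ∑ j, a j - sumSmallest a p := by
  obtain ⟨S, hS, hsum⟩ := exists_card_eq_sum_eq_sumSmallest a hp
  refine ⟨Sᶜ, by simp [card_compl, hS], ?_⟩
  rw [← hsum, eq_sub_iff_add_eq, sum_compl_add_sum]

lemma sum_le_sum_sub_sumSmallest (a : Fin m → ℝ) (S : Finset (Fin m)) :
    ∑ j ∈ S, a j ≤ ∑ j, a j - sumSmallest a (m - #S) := by
  have h := sumSmallest_le_sum a Sᶜ
  rw [card_compl, Fintype.card_fin] at h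
  linarith [sum_compl_add_sum S a]

lemma sum_sub_sumSmallest_le {a r : Fin m → ℝ} {t : ℝ} (hr : ∀ j, 0 ≤ r j)
    (htr : ∀ j, a j ≤ t + r j) {p : ℕ} (hp : p ≤ m) :
    ∑ j, a j - sumSmallest a p ≤ (m - p : ℕ) * t + ∑ j, r j := by
  obtain ⟨S, hS, hsum⟩ := exists_card_eq_sum_eq_sum_sub_sumSmallest a hp
  rw [← hsum, ← hS]
  exact sum_le_card_mul_add_sum hr htr S

lemma exists_add_sum_eq_sum_sub_sumSmallest (a : Fin m → ℝ) (p : ℕ) :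
    ∃ (t : ℝ) (r : Fin m → ℝ), (∀ j, 0 ≤ r j) ∧ (∀ j, a j ≤ t + r j) ∧
      (m - p : ℕ) * t + ∑ j, r j = ∑ j, a j - sumSmallest a p := by
  set s : Fin m → ℝ := fun j => a (Tuple.sort a j)
  obtain ⟨t, ht⟩ := (Tuple.monotone_sort a).exists_separating p
  have hpos : ∀ j, max (s j - t) 0 = if p ≤ (j : ℕ) then s j - t else 0 := by
    intro j
    split_ifs with h
    · exact max_eq_left (sub_nonneg.2 ((ht j).2 h))
    · exact max_eq_right (sub_nonpos.2 ((ht j).1 (by omega)))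
  have hcard : #({j | p ≤ (j : ℕ)} : Finset (Fin m)) = m - p := by
    have h := card_filter_add_card_filter_not (s := (univ : Finset (Fin m)))
      (fun j : Fin m => (j : ℕ) < p)
    simp only [Fin.card_filter_val_lt, not_lt, card_univ, Fintype.card_fin] at h
    omega
  have hsplit : ∑ j : Fin m, (if p ≤ (j : ℕ) then s j - t else 0)
      = ∑ j : Fin m, (if p ≤ (j : ℕ) then s j else 0) - (m - p : ℕ) * t := by
    rw [← sum_filter, ← sum_filter, sum_sub_distrib, sum_const, hcard, nsmul_eq_mul]
  have hupper : ∑ j : Fin m, (if p ≤ (j : ℕ) then s j else 0) = ∑ j, a j - sumSmallest a p := by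
    rw [eq_sub_iff_add_eq, sumSmallest, ← sum_add_distrib, ← Equiv.sum_comp (Tuple.sort a) a]
    refine sum_congr rfl fun j _ => ?_
    split_ifs <;> first | (exfalso; omega) | simp [s]
  refine ⟨t, fun j => max (a j - t) 0, fun j => le_max_right _ _,
    fun j => by linarith [le_max_left (a j - t) 0], ?_⟩
  rw [← Equiv.sum_comp (Tuple.sort a) (fun j => max (a j - t) 0), sum_congr rfl fun j _ => hpos j,
    hsplit, hupper]
  ring

lemma sum_mul_eq_sum_filter {ι : Type*} [Fintype ι] {v : ι → ℝ} (hv : ∀ j, v j = 0 ∨ v j = 1)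
    (a : ι → ℝ) : ∑ j, v j * a j = ∑ j with v j = 1, a j := by
  rw [sum_filter]
  refine sum_congr rfl fun j _ => ?_
  rcases hv j with h | h <;> simp [h]

theorem isLeast_trimmedSum_dual {k₁ k₂ : ℕ} (hk : k₁ + k₂ ≤ m) (a : Fin m → ℝ) :
    IsLeast {y : ℝ | ∃ (t : ℝ) (r v : Fin m → ℝ),
        (∀ j, 0 ≤ r j) ∧ (∀ j, a j ≤ t + r j) ∧ (∀ j, v j = 0 ∨ v j = 1) ∧
        ∑ j, v j = k₁ ∧ y = (m - k₂ : ℕ) * t + ∑ j, r j - ∑ j, v j * a j}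
      (sumSmallest a (m - k₁) - sumSmallest a k₂) := by
  constructor
  · obtain ⟨t, r, hr, htr, hval⟩ := exists_add_sum_eq_sum_sub_sumSmallest a k₂
    obtain ⟨S, hS, hsum⟩ := exists_card_eq_sum_eq_sum_sub_sumSmallest a (p := m - k₁) (by omega)
    refine ⟨t, r, fun j => if j ∈ S then 1 else 0, hr, htr,
      fun j => by by_cases h : j ∈ S <;> simp [h],
      by simp [hS, Nat.sub_sub_self (show k₁ ≤ m by omega)], ?_⟩
    simp only [boole_mul, sum_ite_mem, univ_inter, hsum, hval]
    ring
  · rintro y ⟨t, r, v, hr, htr, hv, hvsum, rfl⟩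
    have hcard : #({j | v j = 1} : Finset (Fin m)) = k₁ := by
      have h := sum_mul_eq_sum_filter hv 1
      simp only [Pi.one_apply, mul_one, sum_const, nsmul_eq_mul, hvsum] at h
      exact_mod_cast h.symm
    have hupper := sum_le_sum_sub_sumSmallest a {j | v j = 1}
    rw [hcard] at hupper
    have hdual := sum_sub_sumSmallest_le hr htr (p := k₂) (by omega)
    rw [sum_mul_eq_sum_filter hv]
    linarith

/-- For K ⊆ ℝ^n nonempty compact, f_1,...,f_m continuous on K,
0 ≤ k₁ and k₁ + k₂ ≤ m, min_{x∈K} ∑_{i=k₁+1}^{m−k₂} f_{(i)}(x) equals the minimum of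
(m−k₂)·t + ∑_j r_j − ∑_j v_j f_j(x) over x ∈ K, t + r_j ≥ f_j(x), r_j ≥ 0,
v_j ∈ {0,1}, ∑_j v_j = k₁.  The trimmed sum is expressed via the increasing sort
`Tuple.sort`: the i-th largest (1-based) value sits at sorted index m − i, so ranks
k₁+1,…,m−k₂ correspond to sorted indices j with k₂ ≤ j < m − k₁. -/
theorem stmt_8 (n m k₁ k₂ : ℕ) (hk : k₁ + k₂ ≤ m)
    (K : Set (EuclideanSpace ℝ (Fin n))) (hK : IsCompact K) (hne : K.Nonempty)
    (f : Fin m → EuclideanSpace ℝ (Fin n) → ℝ) (hf : ∀ i, ContinuousOn (f i) K) :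
    ∃ c : ℝ,
      IsLeast {y : ℝ | ∃ x ∈ K,
        y = ∑ i : Fin m, if k₂ ≤ (i : ℕ) ∧ (i : ℕ) < m - k₁
              then (fun j => f j x) (Tuple.sort (fun j => f j x) i) else 0} c ∧
      IsLeast {y : ℝ | ∃ x ∈ K, ∃ (t : ℝ) (r v : Fin m → ℝ),
        (∀ j, 0 ≤ r j) ∧ (∀ j, f j x ≤ t + r j) ∧
        (∀ j, v j = 0 ∨ v j = 1) ∧ (∑ j : Fin m, v j) = k₁ ∧
        y = (m - k₂ : ℕ) * t + ∑ j : Fin m, r j - ∑ j : Fin m, v j * f j x} c := by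
  set g : EuclideanSpace ℝ (Fin n) → ℝ := fun x =>
    sumSmallest (fun j => f j x) (m - k₁) - sumSmallest (fun j => f j x) k₂
  have hg : ContinuousOn g K :=
    (ContinuousOn.sumSmallest hf (by omega)).sub (ContinuousOn.sumSmallest hf (by omega))
  obtain ⟨x₀, hx₀, hmin⟩ := hK.exists_isMinOn hne hg
  have htrim : ∀ x, g x = ∑ i : Fin m, if k₂ ≤ (i : ℕ) ∧ (i : ℕ) < m - k₁
      then f (Tuple.sort (fun j => f j x) i) x else 0 :=
    fun x => sumSmallest_sub_sumSmallest _ (by omega)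
  refine ⟨g x₀, ⟨⟨x₀, hx₀, htrim x₀⟩, ?_⟩, ?_, ?_⟩
  · rintro y ⟨x, hx, rfl⟩
    exact (htrim x) ▸ hmin hx
  · obtain ⟨t, r, v, h⟩ := (isLeast_trimmedSum_dual hk fun j => f j x₀).1
    exact ⟨x₀, hx₀, t, r, v, h⟩
  · rintro y ⟨x, hx, t, r, v, h⟩
    exact (hmin hx).trans ((isLeast_trimmedSum_dual hk fun j => f j x).2 ⟨t, r, v, h⟩)
end
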